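/- Let $\Pi$ be a set of policies $\pi: \mathcal{X} \to \Delta(\mathcal{A})$ over a finite action set $\mathcal{A}$, each $L$-Lipschitz in the context: $|\pi(a|x) - \pi(a|x')| \le L\,\mathrm{dist}(x,x')$ for all $a$. Suppose a dataset contains samples $(x_h^{(j)}, a_h^{(j)})$ and the policy $\pi$ satisfies the eligible-action constraint: $\sum_{a \in A_h(x;\mathcal{D},\delta)} \pi(a|x) = 1$ for every observed $x = x_h^{(i)}$, where $A_h(x;\mathcal{D},\delta) = \{a : \exists (x_h,a) \in \mathcal{D} \text{ with } \mathrm{dist}(x,x_h) \le \delta\}$. Then for every observed context $x_h^{(i)}$, the sum of one-step importance weights over samples in the ball $\mathcal{B}(x_h^{(i)},\delta)$ satisfies $\sum_{x_h^{(j)} \in \mathcal{B}(x_h^{(i)},\delta)} \pi(a_h^{(j)}|x_h^{(j)})/\mu(a_h^{(j)}|x_h^{(j)}) \ge 1 - \delta L |\mathcal{A}|$. -/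
import Mathlib


open Classical in
/-- Theorem 1 (POELA): under the eligible-action constraint and an L-Lipschitz policy,
the sum of one-step importance weights over samples in the δ-ball around any observed
context is at least `1 - δ L |A|`. -/
theorem stmt0 {X : Type*} [MetricSpace X] {A : Type*} [Fintype A]
    (n : ℕ) (xs : Fin n → X) (as : Fin n → A)
    (π μ : X → A → ℝ) (L δ : ℝ) (hδ : 0 ≤ δ) (hL : 0 ≤ L)
    (hπnn : ∀ x a, 0 ≤ π x a)
    (hπsum : ∀ x, ∑ a, π x a = 1)
    (hLip : ∀ a x x', |π x a - π x' a| ≤ L * dist x x')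
    (hμpos : ∀ j, 0 < μ (xs j) (as j)) (hμle : ∀ j, μ (xs j) (as j) ≤ 1)
    (helig : ∀ i : Fin n,
      ∑ a ∈ Finset.univ.filter
          (fun a => ∃ j : Fin n, as j = a ∧ dist (xs i) (xs j) ≤ δ),
        π (xs i) a = 1) :
    ∀ i : Fin n,
      1 - δ * L * (Fintype.card A : ℝ) ≤
        ∑ j ∈ Finset.univ.filter (fun j => dist (xs i) (xs j) ≤ δ),
          π (xs j) (as j) / μ (xs j) (as j) := by
  intro i
  set E : Finset A := Finset.univ.filter
      (fun a => ∃ j : Fin n, as j = a ∧ dist (xs i) (xs j) ≤ δ) with hE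
  set B : Finset (Fin n) := Finset.univ.filter (fun j => dist (xs i) (xs j) ≤ δ) with hB
  -- choice function
  have hex : ∀ a ∈ E, ∃ j : Fin n, as j = a ∧ dist (xs i) (xs j) ≤ δ := by
    intro a ha
    exact (Finset.mem_filter.mp ha).2
  classical
  let g : A → Fin n := fun a => if h : ∃ j : Fin n, as j = a ∧ dist (xs i) (xs j) ≤ δ
    then h.choose else i
  have hg_as : ∀ a ∈ E, as (g a) = a := by
    intro a ha
    have h := hex a ha
    simp only [g, dif_pos h]
    exact h.choose_spec.1
  have hg_mem : ∀ a ∈ E, g a ∈ B := by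
    intro a ha
    have h := hex a ha
    simp only [g, dif_pos h, hB, Finset.mem_filter]
    exact ⟨Finset.mem_univ _, h.choose_spec.2⟩
  have hg_inj : Set.InjOn g E := by
    intro a ha b hb hab
    rw [← hg_as a ha, ← hg_as b hb, hab]
  -- per-action bound
  have hstep : ∀ a ∈ E, π (xs i) a ≤
      π (xs (g a)) (as (g a)) / μ (xs (g a)) (as (g a)) + δ * L := by
    intro a ha
    have h := hex a ha
    have hga : as (g a) = a := hg_as a ha
    have hdist : dist (xs i) (xs (g a)) ≤ δ := by
      have := hg_mem a ha
      rw [hB, Finset.mem_filter] at this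
      exact this.2
    have hlip : π (xs i) a - π (xs (g a)) a ≤ L * dist (xs i) (xs (g a)) :=
      le_trans (le_abs_self _) (hLip a _ _)
    have h1 : π (xs i) a ≤ π (xs (g a)) a + δ * L := by
      have : L * dist (xs i) (xs (g a)) ≤ L * δ := mul_le_mul_of_nonneg_left hdist hL
      nlinarith
    have h2 : π (xs (g a)) (as (g a)) ≤
        π (xs (g a)) (as (g a)) / μ (xs (g a)) (as (g a)) := by
      rw [le_div_iff₀ (hμpos (g a))]
      exact mul_le_of_le_one_right (hπnn _ _) (hμle _)
    have heq : π (xs (g a)) (as (g a)) = π (xs (g a)) a := by rw [hga]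
    linarith
  -- sum over E
  have hsum1 : (1 : ℝ) ≤
      (∑ a ∈ E, π (xs (g a)) (as (g a)) / μ (xs (g a)) (as (g a))) + E.card * (δ * L) := by
    have := Finset.sum_le_sum hstep
    rw [helig i] at this
    simpa [Finset.sum_add_distrib] using this
  -- image sum ≤ ball sum
  have hsum2 : (∑ a ∈ E, π (xs (g a)) (as (g a)) / μ (xs (g a)) (as (g a))) ≤
      ∑ j ∈ B, π (xs j) (as j) / μ (xs j) (as j) := by
    have himg := Finset.sum_image (s := E) (g := g)
      (f := fun j => π (xs j) (as j) / μ (xs j) (as j))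
      (fun a ha b hb hab => hg_inj ha hb hab)
    rw [← himg]
    apply Finset.sum_le_sum_of_subset_of_nonneg
    · intro j hj
      obtain ⟨a, ha, rfl⟩ := Finset.mem_image.mp hj
      exact hg_mem a ha
    · intro j _ _
      exact div_nonneg (hπnn _ _) (hμpos j).le
  have hcard : (E.card : ℝ) ≤ Fintype.card A := by
    exact_mod_cast Finset.card_le_card (Finset.subset_univ E) |>.trans_eq
      (Finset.card_univ)
  have : (E.card : ℝ) * (δ * L) ≤ (Fintype.card A : ℝ) * (δ * L) :=
    mul_le_mul_of_nonneg_right hcard (by positivity)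
  calc 1 - δ * L * (Fintype.card A : ℝ)
      ≤ 1 - E.card * (δ * L) := by nlinarith
    _ ≤ ∑ j ∈ B, π (xs j) (as j) / μ (xs j) (as j) := by linarith
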